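/- Let a ∈ ℂ and let F̂ ∈ ℂ[[x,u₁,u₂]] be a formal power series satisfying x²·∂F̂/∂x + (1+ax)·u₁·∂F̂/∂u₁ − (1+ax)·u₂·∂F̂/∂u₂ = 0 as a formal power series (i.e., F̂ is a formal first integral of the vector field X_a). Then there exists a one-variable formal power series Ĝ ∈ ℂ[[z]] such that F̂ equals the substitution of the series u₁u₂ into Ĝ, i.e., F̂(x,u₁,u₂) = Ĝ(u₁u₂). In other words, h(u₁,u₂) = u₁u₂ is a primitive first integral of X_a: every formal first integral of X_a factors through h. -/

import Mathlib

/-- Formal partial derivative of a multivariate formal power series with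
respect to the `i`-th variable. -/
noncomputable def mvPderiv {n : ℕ} (i : Fin n) (F : MvPowerSeries (Fin n) ℂ) :
    MvPowerSeries (Fin n) ℂ :=
  fun d => ((d i : ℕ) + 1 : ℂ) * MvPowerSeries.coeff (R := ℂ) (d + Finsupp.single i 1) F

/-- The substitution of `u₁u₂` (the product of the second and third variables)
into a one-variable formal power series `G`: the coefficient of
`x^j u₁^k u₂^l` in `G(u₁u₂)` is the `k`-th coefficient of `G` when `j = 0` and
`k = l`, and `0` otherwise. -/
noncomputable def substU1U2 (G : PowerSeries ℂ) : MvPowerSeries (Fin 3) ℂ :=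
  fun d => if d 0 = 0 ∧ d 1 = d 2 then PowerSeries.coeff (R := ℂ) (d 1) G else 0

open MvPowerSeries

/-!
Write `f(j,k,l)` for the coefficient of `x^j u₁^k u₂^l` in `F̂`. Comparing coefficients of
`x^(j+1) u₁^k u₂^l` in `X_a F̂ = 0` gives
`j f(j,k,l) + (k - l) f(j+1,k,l) + a (k - l) f(j,k,l) = 0`, and at `j = 0` simply
`(k - l) f(0,k,l) = 0`. For `k ≠ l` induction on `j` kills every `f(j,k,l)`; for `k = l` the
relation reads `j f(j,k,k) = 0`, which kills `f(j,k,k)` for `j ≥ 1`. Only the coefficients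
`f(0,k,k)` survive, and they are the coefficients of `Ĝ`.
-/

open Finsupp

namespace MvPowerSeries

variable {σ R : Type*} [CommSemiring R]

theorem coeff_add_single_X_mul (φ : MvPowerSeries σ R) (s : σ) (d : σ →₀ ℕ) :
    coeff (d + single s 1) (X s * φ) = coeff d φ := by
  rw [add_comm, X, coeff_add_monomial_mul, one_mul]

theorem coeff_X_mul_of_apply_eq_zero (φ : MvPowerSeries σ R) {s : σ} {d : σ →₀ ℕ}
    (hd : d s = 0) : coeff d (X s * φ) = 0 := by
  rw [X, coeff_monomial_mul, if_neg]
  simp [single_le_iff, hd]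

theorem coeff_add_single_one_add_C_mul_X_mul (a : R) (φ : MvPowerSeries σ R) (s : σ)
    (d : σ →₀ ℕ) :
    coeff (d + single s 1) ((1 + C a * X s) * φ) = coeff (d + single s 1) φ + a * coeff d φ := by
  rw [add_mul, one_mul, mul_assoc, map_add, coeff_C_mul, coeff_add_single_X_mul]

theorem coeff_one_add_C_mul_X_mul_of_apply_eq_zero (a : R) (φ : MvPowerSeries σ R) {s : σ}
    {d : σ →₀ ℕ} (hd : d s = 0) : coeff d ((1 + C a * X s) * φ) = coeff d φ := by
  rw [add_mul, one_mul, mul_assoc, map_add, coeff_C_mul, coeff_X_mul_of_apply_eq_zero _ hd,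
    mul_zero, add_zero]

end MvPowerSeries

section Derivations

variable {n : ℕ}

theorem coeff_mvPderiv (i : Fin n) (F : MvPowerSeries (Fin n) ℂ) (d : Fin n →₀ ℕ) :
    coeff d (mvPderiv i F) = ((d i : ℂ) + 1) * coeff (d + single i 1) F :=
  rfl

theorem coeff_X_mul_mvPderiv (i : Fin n) (F : MvPowerSeries (Fin n) ℂ) (d : Fin n →₀ ℕ) :
    coeff d (X i * mvPderiv i F) = d i * coeff d F := by
  by_cases hd : d i = 0
  · rw [coeff_X_mul_of_apply_eq_zero _ hd, hd, Nat.cast_zero, zero_mul]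
  · obtain ⟨e, rfl⟩ : ∃ e, d = e + single i 1 :=
      ⟨d - single i 1,
        (tsub_add_cancel_of_le (single_le_iff.mpr (Nat.one_le_iff_ne_zero.mpr hd))).symm⟩
    rw [coeff_add_single_X_mul, coeff_mvPderiv]
    simp

theorem coeff_add_single_X_sq_mul_mvPderiv (i : Fin n) (F : MvPowerSeries (Fin n) ℂ)
    (d : Fin n →₀ ℕ) : coeff (d + single i 1) (X i ^ 2 * mvPderiv i F) = d i * coeff d F := by
  rw [sq, mul_assoc, coeff_add_single_X_mul, coeff_X_mul_mvPderiv]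

theorem coeff_X_sq_mul_mvPderiv_of_apply_eq_zero (i : Fin n) (F : MvPowerSeries (Fin n) ℂ)
    {d : Fin n →₀ ℕ} (hd : d i = 0) : coeff d (X i ^ 2 * mvPderiv i F) = 0 := by
  rw [sq, mul_assoc, coeff_X_mul_of_apply_eq_zero _ hd]

end Derivations

noncomputable def eulerU (F : MvPowerSeries (Fin 3) ℂ) : MvPowerSeries (Fin 3) ℂ :=
  X 1 * mvPderiv 1 F - X 2 * mvPderiv 2 F

/-- The derivation of `X_a`, in the coordinates `x, u₁, u₂` = `X 0, X 1, X 2`. -/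
noncomputable def derivXa (a : ℂ) (F : MvPowerSeries (Fin 3) ℂ) : MvPowerSeries (Fin 3) ℂ :=
  X 0 ^ 2 * mvPderiv 0 F + (1 + C a * X 0) * eulerU F

theorem coeff_eulerU (F : MvPowerSeries (Fin 3) ℂ) (d : Fin 3 →₀ ℕ) :
    coeff d (eulerU F) = ((d 1 : ℂ) - d 2) * coeff d F := by
  rw [eulerU, map_sub, coeff_X_mul_mvPderiv, coeff_X_mul_mvPderiv, sub_mul]

theorem coeff_derivXa_of_apply_zero_eq_zero (a : ℂ) (F : MvPowerSeries (Fin 3) ℂ)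
    {d : Fin 3 →₀ ℕ} (hd : d 0 = 0) :
    coeff d (derivXa a F) = ((d 1 : ℂ) - d 2) * coeff d F := by
  rw [derivXa, map_add, coeff_X_sq_mul_mvPderiv_of_apply_eq_zero _ _ hd,
    coeff_one_add_C_mul_X_mul_of_apply_eq_zero _ _ hd, coeff_eulerU, zero_add]

theorem coeff_derivXa_add_single_zero (a : ℂ) (F : MvPowerSeries (Fin 3) ℂ) (d : Fin 3 →₀ ℕ) :
    coeff (d + single 0 1) (derivXa a F) =
      d 0 * coeff d F + ((d 1 : ℂ) - d 2) * (coeff (d + single 0 1) F + a * coeff d F) := by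
  rw [derivXa, map_add, coeff_add_single_X_sq_mul_mvPderiv, coeff_add_single_one_add_C_mul_X_mul,
    coeff_eulerU, coeff_eulerU]
  simp only [coe_add, Pi.add_apply, single_apply, Fin.reduceEq, if_false, add_zero]
  ring

theorem coeff_substU1U2 (G : PowerSeries ℂ) (d : Fin 3 →₀ ℕ) :
    coeff d (substU1U2 G) = if d 0 = 0 ∧ d 1 = d 2 then PowerSeries.coeff (d 1) G else 0 :=
  rfl

section FirstIntegral

variable {a : ℂ} {F : MvPowerSeries (Fin 3) ℂ}

theorem coeff_eq_zero_of_derivXa_eq_zero_of_ne (hF : derivXa a F = 0) {d : Fin 3 →₀ ℕ}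
    (hd : d 1 ≠ d 2) : coeff d F = 0 := by
  induction hd0 : d 0 generalizing d with
  | zero =>
    have hrel := coeff_derivXa_of_apply_zero_eq_zero a F hd0
    rw [hF, map_zero, eq_comm] at hrel
    exact (mul_eq_zero.mp hrel).resolve_left (sub_ne_zero.mpr (by exact_mod_cast hd))
  | succ j ih =>
    obtain ⟨e, rfl⟩ : ∃ e, d = e + single 0 1 :=
      ⟨d - single 0 1, (tsub_add_cancel_of_le (single_le_iff.mpr (by omega))).symm⟩
    have he : e 1 ≠ e 2 := by simpa [single_apply] using hd
    have hrel := coeff_derivXa_add_single_zero a F e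
    rw [hF, map_zero, ih he (by simpa [single_apply] using hd0), eq_comm] at hrel
    simpa [sub_eq_zero, he] using hrel

theorem coeff_eq_zero_of_derivXa_eq_zero (hF : derivXa a F = 0) {d : Fin 3 →₀ ℕ}
    (hd : ¬(d 0 = 0 ∧ d 1 = d 2)) : coeff d F = 0 := by
  by_cases h12 : d 1 = d 2
  · have hrel := coeff_derivXa_add_single_zero a F d
    rw [hF, map_zero, h12, sub_self, zero_mul, add_zero, eq_comm] at hrel
    exact (mul_eq_zero.mp hrel).resolve_left (by exact_mod_cast fun h0 => hd ⟨h0, h12⟩)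
  · exact coeff_eq_zero_of_derivXa_eq_zero_of_ne hF h12

theorem eq_substU1U2_of_derivXa_eq_zero (hF : derivXa a F = 0) :
    F = substU1U2 (PowerSeries.mk fun k => coeff (single 1 k + single 2 k) F) := by
  ext d
  rw [coeff_substU1U2]
  split_ifs with hd
  · rw [PowerSeries.coeff_mk]
    congr
    ext i
    fin_cases i <;> simp [hd.1, hd.2]
  · exact coeff_eq_zero_of_derivXa_eq_zero hF hd

end FirstIntegral

/-- `h(u₁,u₂) = u₁u₂` is a primitive first integral of
`X_a = x² ∂ₓ + (1+ax)(u₁ ∂_{u₁} − u₂ ∂_{u₂})`: every formal first integral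
`F̂ ∈ ℂ[[x,u₁,u₂]]` of `X_a` is of the form `Ĝ(u₁u₂)` for some one-variable
formal power series `Ĝ`. -/
theorem stmt5 (a : ℂ) (F : MvPowerSeries (Fin 3) ℂ)
    (hF : (X 0 : MvPowerSeries (Fin 3) ℂ) ^ 2 * mvPderiv 0 F
        + (1 + C (σ := Fin 3) (R := ℂ) a * X 0) * X 1 * mvPderiv 1 F
        - (1 + C (σ := Fin 3) (R := ℂ) a * X 0) * X 2 * mvPderiv 2 F = 0) :
    ∃ G : PowerSeries ℂ, F = substU1U2 G := by
  have hXa : derivXa a F = 0 := by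
    rw [derivXa, eulerU]
    linear_combination hF
  exact ⟨_, eq_substU1U2_of_derivXa_eq_zero hXa⟩
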